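/- Let θ be a ternary relation on ℕ, X ⊆ ℕ a finite set, n ∈ ℕ and a ≤ min X. If X is ω^{n+1}·a-large*(θ) and exp-sparse, then for every coloring f : X → {0,…,a−1} there is an f-homogeneous ω^n-large*(θ) subset of X (f-homogeneous means f is constant on the subset). -/

import Mathlib

/-- The minimum of a finite set of naturals (`0` if empty). -/
noncomputable def minN (X : Finset ℕ) : ℕ := sInf (X : Set ℕ)

/-- The maximum of a finite set of naturals (`0` if empty). -/
def maxN (X : Finset ℕ) : ℕ := X.sup id

/-- `E` lies entirely below `F`. -/
def SetBelow (E F : Finset ℕ) : Prop := ∀ x ∈ E, ∀ y ∈ F, x < y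

/-- `E` and `F` are `θ`-apart: for every `x < max E` there is `y < min F`
with `θ x y z` for all `z < max F`. -/
def ThetaApart (θ : ℕ → ℕ → ℕ → Prop) (E F : Finset ℕ) : Prop :=
  ∀ x < maxN E, ∃ y < minN F, ∀ z < maxN F, θ x y z

/-- `L·k`: finite sets containing `k` pairwise `θ`-apart members `X₀ < ⋯ < X_{k-1}` of `L`. -/
def MulK (θ : ℕ → ℕ → ℕ → Prop) (L : Set (Finset ℕ)) (k : ℕ) : Set (Finset ℕ) :=
  {F | ∃ X : Fin k → Finset ℕ, (∀ i, X i ∈ L) ∧ (∀ i, X i ⊆ F) ∧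
    ∀ i j, i < j → SetBelow (X i) (X j) ∧ ThetaApart θ (X i) (X j)}

/-- `L·σ` for a finite sequence `σ`: `L·ε = L`, `L·(k⌢τ) = (L·k)·τ`. -/
def MulSeq (θ : ℕ → ℕ → ℕ → Prop) (L : Set (Finset ℕ)) : List ℕ → Set (Finset ℕ)
  | [] => L
  | k :: τ => MulSeq θ (MulK θ L k) τ

/-- `L^θ_n`: the `ω^n`-large*(θ) finite sets. -/
noncomputable def LargeStar (θ : ℕ → ℕ → ℕ → Prop) : ℕ → Set (Finset ℕ)
  | 0 => {X | X.Nonempty}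
  | n + 1 => {X | X.Nonempty ∧
      X.erase (minN X) ∈ MulSeq θ (LargeStar θ n) (List.replicate (n + 1) (minN X))}

/-- `ω^n`-largeness(θ) (the non-starred notion). -/
noncomputable def LargeTheta (θ : ℕ → ℕ → ℕ → Prop) : ℕ → Set (Finset ℕ)
  | 0 => {X | X.Nonempty}
  | n + 1 => {X | X.Nonempty ∧ X.erase (minN X) ∈ MulK θ (LargeTheta θ n) (minN X)}

/-- `L·k` without θ-apartness (plain largeness product). -/
def MulKPlain (L : Set (Finset ℕ)) (k : ℕ) : Set (Finset ℕ) :=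
  {F | ∃ X : Fin k → Finset ℕ, (∀ i, X i ∈ L) ∧ (∀ i, X i ⊆ F) ∧
    ∀ i j, i < j → SetBelow (X i) (X j)}

/-- Ketonen–Solovay `ω^n`-largeness (no θ). -/
noncomputable def LargePlain : ℕ → Set (Finset ℕ)
  | 0 => {X | X.Nonempty}
  | n + 1 => {X | X.Nonempty ∧ X.erase (minN X) ∈ MulKPlain (LargePlain n) (minN X)}

/-- `g`-sparsity. -/
def GSparse (g : ℕ → ℕ) (X : Finset ℕ) : Prop := ∀ x ∈ X, ∀ y ∈ X, x < y → g x < y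

/-- exp-sparsity. -/
def ExpSparse (X : Finset ℕ) : Prop := ∀ x ∈ X, ∀ y ∈ X, x < y → 4 ^ x < y

/-- `ω^k`-sparsity. -/
def OmegaSparse (k : ℕ) (X : Finset ℕ) : Prop :=
  ∀ x ∈ X, ∀ y ∈ X, x < y → Finset.Ioc x y ∈ LargePlain k

/-!
Induction on `n` and, for fixed `n`, on the number `a` of colours. Let `m` be the minimum of the
last of the `a` blocks of `X` and `k = m / a`. Above `m` that block lies in
`L_{n+1}·(m,…,m)` (`n + 2` factors). The induction hypothesis for `n` finds a homogeneous
`ω^n`-large* set in each innermost product `L_{n+1}·m ⊆ L_{n+1}·a`, and pigeonholing `m ≥ a·k`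
factors level by level yields a homogeneous `Z ∈ L_n·(k,…,k)` of some colour `c`. If some `y ≤ k`
of `X` has colour `c`, then `{y} ∪ Z` is `ω^{n+1}`-large*. Otherwise exp-sparseness puts every
element of the earlier blocks below `k` (`x·a ≤ x² < 4^x < m`), so they avoid colour `c` and the
induction hypothesis for `a - 1` colours applies to them.
-/

open Finset

section Basic

variable {θ : ℕ → ℕ → ℕ → Prop} {X Y : Finset ℕ}

lemma minN_le {x : ℕ} (hx : x ∈ X) : minN X ≤ x :=
  Nat.sInf_le (mem_coe.2 hx)

lemma minN_mem (hX : X.Nonempty) : minN X ∈ X :=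
  mem_coe.1 (Nat.sInf_mem (coe_nonempty.2 hX))

lemma nonempty_of_minN_pos (h : 0 < minN X) : X.Nonempty := by
  rw [nonempty_iff_ne_empty]
  rintro rfl
  simp [minN] at h

lemma minN_le_minN (hXY : X ⊆ Y) (hX : X.Nonempty) : minN Y ≤ minN X :=
  minN_le (hXY (minN_mem hX))

lemma minN_insert_of_forall_lt {y : ℕ} (h : ∀ z ∈ X, y < z) : minN (insert y X) = y :=
  le_antisymm (minN_le (mem_insert_self y X)) <| by
    rcases mem_insert.1 (minN_mem (insert_nonempty y X)) with hy | hX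
    · exact hy.ge
    · exact (h _ hX).le

lemma minN_lt_of_mem_erase {x : ℕ} (hx : x ∈ X.erase (minN X)) : minN X < x :=
  (minN_le (mem_of_mem_erase hx)).lt_of_ne (ne_of_mem_erase hx).symm

lemma maxN_le_maxN (hXY : X ⊆ Y) : maxN X ≤ maxN Y :=
  sup_mono hXY

lemma SetBelow.mono {E E' F F' : Finset ℕ} (h : SetBelow E F) (hE : E' ⊆ E) (hF : F' ⊆ F) :
    SetBelow E' F' :=
  fun x hx y hy => h x (hE hx) y (hF hy)

lemma ThetaApart.mono {E E' F F' : Finset ℕ} (h : ThetaApart θ E F) (hE : E' ⊆ E) (hF : F' ⊆ F)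
    (hF' : F'.Nonempty) : ThetaApart θ E' F' := by
  intro x hx
  obtain ⟨y, hy, hz⟩ := h x (hx.trans_le (maxN_le_maxN hE))
  exact ⟨y, hy.trans_le (minN_le_minN hF hF'), fun z hz' => hz z (hz'.trans_le (maxN_le_maxN hF))⟩

lemma ExpSparse.mono (h : ExpSparse Y) (hXY : X ⊆ Y) : ExpSparse X :=
  fun x hx y hy => h x (hXY hx) y (hXY hy)

lemma ExpSparse.mul_self_lt (h : ExpSparse X) {x y : ℕ} (hx : x ∈ X) (hy : y ∈ X) (hxy : x < y) :
    x * x < y :=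
  calc x * x < 2 ^ x * 2 ^ x := Nat.mul_lt_mul'' Nat.lt_two_pow_self Nat.lt_two_pow_self
    _ = 4 ^ x := by rw [← mul_pow]; rfl
    _ < y := h x hx y hy hxy

lemma ExpSparse.le_div (h : ExpSparse X) {x y b : ℕ} (hx : x ∈ X) (hy : y ∈ X) (hxy : x < y)
    (hb : 0 < b) (hbx : b ≤ x) : x ≤ y / b :=
  (Nat.le_div_iff_mul_le hb).2 ((Nat.mul_le_mul_left x hbx).trans (h.mul_self_lt hx hy hxy).le)

end Basic

section Products

variable {θ : ℕ → ℕ → ℕ → Prop} {L L' : Set (Finset ℕ)}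

lemma mulK_mono (h : L ⊆ L') (k : ℕ) : MulK θ L k ⊆ MulK θ L' k := by
  rintro F ⟨W, hWL, hWF, hW⟩
  exact ⟨W, fun i => h (hWL i), hWF, hW⟩

lemma mulK_anti {k k' : ℕ} (h : k' ≤ k) : MulK θ L k ⊆ MulK θ L k' := by
  rintro F ⟨W, hWL, hWF, hW⟩
  exact ⟨fun i => W (Fin.castLE h i), fun i => hWL _, fun i => hWF _, fun i j hij => hW _ _ hij⟩

lemma nonempty_of_mem_mulK (hL : ∀ Y ∈ L, Y.Nonempty) {k : ℕ} (hk : 0 < k) {F : Finset ℕ}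
    (hF : F ∈ MulK θ L k) : F.Nonempty := by
  obtain ⟨W, hWL, hWF, -⟩ := hF
  exact (hL _ (hWL ⟨0, hk⟩)).mono (hWF _)

lemma biUnion_mem_mulK {m k : ℕ} {W : Fin m → Finset ℕ}
    (hW : ∀ i j, i < j → SetBelow (W i) (W j) ∧ ThetaApart θ (W i) (W j))
    {e : Fin k → Fin m} (he : StrictMono e) {Z : Fin k → Finset ℕ} (hZW : ∀ t, Z t ⊆ W (e t))
    (hZL : ∀ t, Z t ∈ L') (hZ : ∀ t, (Z t).Nonempty) : univ.biUnion Z ∈ MulK θ L' k :=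
  ⟨Z, hZL, fun t => subset_biUnion_of_mem Z (mem_univ t), fun s t hst =>
    ⟨(hW _ _ (he hst)).1.mono (hZW s) (hZW t), (hW _ _ (he hst)).2.mono (hZW s) (hZW t) (hZ t)⟩⟩

lemma mulSeq_replicate_succ (L : Set (Finset ℕ)) (j k : ℕ) :
    MulSeq θ L (List.replicate (j + 1) k) = MulK θ (MulSeq θ L (List.replicate j k)) k := by
  induction j generalizing L with
  | zero => rfl
  | succ j ih => exact ih (MulK θ L k)

lemma mulSeq_replicate_anti {y k : ℕ} (h : y ≤ k) :
    ∀ j, MulSeq θ L (List.replicate j k) ⊆ MulSeq θ L (List.replicate j y)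
  | 0 => subset_rfl
  | j + 1 => by
    rw [mulSeq_replicate_succ, mulSeq_replicate_succ]
    exact (mulK_mono (mulSeq_replicate_anti h j) k).trans (mulK_anti h)

lemma nonempty_of_mem_mulSeq_replicate (hL : ∀ Y ∈ L, Y.Nonempty) {k : ℕ} (hk : 0 < k) :
    ∀ j, ∀ F ∈ MulSeq θ L (List.replicate j k), F.Nonempty
  | 0 => hL
  | j + 1 => by
    rw [mulSeq_replicate_succ]
    exact fun F => nonempty_of_mem_mulK (nonempty_of_mem_mulSeq_replicate hL hk j) hk

lemma nonempty_of_mem_largeStar : ∀ {n : ℕ} {Y : Finset ℕ}, Y ∈ LargeStar θ n → Y.Nonempty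
  | 0, _, h => h
  | _ + 1, _, h => h.1

lemma insert_mem_largeStar_succ {n k y : ℕ} {Z : Finset ℕ}
    (hZ : Z ∈ MulSeq θ (LargeStar θ n) (List.replicate (n + 1) k)) (hyZ : ∀ z ∈ Z, y < z)
    (hyk : y ≤ k) : insert y Z ∈ LargeStar θ (n + 1) := by
  refine ⟨insert_nonempty y Z, ?_⟩
  rw [minN_insert_of_forall_lt hyZ, erase_insert fun hy => (hyZ y hy).false]
  exact mulSeq_replicate_anti hyk (n + 1) hZ

end Products

section Colourings

variable {α : Type*} {θ : ℕ → ℕ → ℕ → Prop} {L L' : Set (Finset ℕ)}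

def HasHomogeneousSubset (f : ℕ → α) (C : Finset α) (L : Set (Finset ℕ)) (R : Finset ℕ) : Prop :=
  ∃ c ∈ C, ∃ Z ⊆ R, Z ∈ L ∧ ∀ z ∈ Z, f z = c

/-- Pigeonhole through one θ-product: among `m ≥ |C|·k` blocks, `k` have homogeneous subsets of a
common colour. -/
lemma hasHomogeneousSubset_mulK [DecidableEq α] (f : ℕ → α) {C : Finset α} (hC : C.Nonempty)
    (hL' : ∀ Y ∈ L', Y.Nonempty) {k m : ℕ} (hkm : #C * k ≤ m) {R : Finset ℕ}
    (hR : R ∈ MulK θ L m) (hblocks : ∀ R' ⊆ R, R' ∈ L → HasHomogeneousSubset f C L' R') :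
    HasHomogeneousSubset f C (MulK θ L' k) R := by
  obtain ⟨W, hWL, hWR, hW⟩ := hR
  choose c hc Z hZW hZL hZc using fun i => hblocks (W i) (hWR i) (hWL i)
  obtain ⟨c₀, hc₀, hcard⟩ := exists_le_card_fiber_of_mul_le_card_of_maps_to
    (s := univ) (fun i _ => hc i) hC (by simpa using hkm)
  set e := ({i | c i = c₀} : Finset (Fin m)).orderEmbOfCardLe hcard
  have he : ∀ t, c (e t) = c₀ := fun t => (mem_filter.1 (orderEmbOfCardLe_mem _ hcard t)).2
  refine ⟨c₀, hc₀, univ.biUnion fun t => Z (e t),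
    biUnion_subset.2 fun t _ => (hZW _).trans (hWR _),
    biUnion_mem_mulK hW e.strictMono (fun t => hZW _) (fun t => hZL _) (fun t => hL' _ (hZL _)),
    fun z hz => ?_⟩
  obtain ⟨t, -, hzt⟩ := mem_biUnion.1 hz
  rw [hZc _ z hzt, he t]

lemma hasHomogeneousSubset_mulSeq_replicate [DecidableEq α] (f : ℕ → α) {C : Finset α}
    (hC : C.Nonempty) (hL' : ∀ Y ∈ L', Y.Nonempty) {k m : ℕ} (hk : 0 < k) (hkm : #C * k ≤ m)
    {S : Finset ℕ} (hbase : ∀ R ⊆ S, R ∈ L → HasHomogeneousSubset f C L' R) :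
    ∀ j, ∀ R ⊆ S, R ∈ MulSeq θ L (List.replicate j m) →
      HasHomogeneousSubset f C (MulSeq θ L' (List.replicate j k)) R
  | 0 => hbase
  | j + 1 => fun R hRS hR => by
    rw [mulSeq_replicate_succ] at hR ⊢
    exact hasHomogeneousSubset_mulK f hC (nonempty_of_mem_mulSeq_replicate hL' hk j) hkm hR
      fun R' hR'R hR' => hasHomogeneousSubset_mulSeq_replicate f hC hL' hk hkm hbase j R'
        (hR'R.trans hRS) hR'

def LargeStarPigeonhole (θ : ℕ → ℕ → ℕ → Prop) (f : ℕ → α) (n a : ℕ) : Prop :=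
  ∀ (C : Finset α) (X : Finset ℕ), #C = a → X.Nonempty → a ≤ minN X →
    X ∈ MulK θ (LargeStar θ (n + 1)) a → ExpSparse X → (∀ x ∈ X, f x ∈ C) →
    HasHomogeneousSubset f C (LargeStar θ n) X

lemma largeStarPigeonhole_zero (f : ℕ → α) (a : ℕ) : LargeStarPigeonhole θ f 0 a := by
  rintro C X - ⟨x, hx⟩ - - - hf
  exact ⟨f x, hf x hx, {x}, singleton_subset_iff.2 hx, singleton_nonempty x, by simp⟩

lemma largeStarPigeonhole_succ_zero (f : ℕ → α) (n : ℕ) : LargeStarPigeonhole θ f (n + 1) 0 := by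
  rintro C X hC ⟨x, hx⟩ - - - hf
  simpa [card_eq_zero.1 hC] using hf x hx

lemma hasHomogeneousSubset_erase_minN [DecidableEq α] (f : ℕ → α) {n : ℕ}
    (ihn : ∀ b, LargeStarPigeonhole θ f n b) {C : Finset α} (hC : C.Nonempty) {X B : Finset ℕ}
    (hCX : #C ≤ minN X) (hsp : ExpSparse X) (hf : ∀ x ∈ X, f x ∈ C) (hBX : B ⊆ X)
    (hB : B ∈ LargeStar θ (n + 2)) :
    HasHomogeneousSubset f C (MulSeq θ (LargeStar θ n) (List.replicate (n + 1) (minN B / #C)))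
      (B.erase (minN B)) := by
  have hCB : #C ≤ minN B := hCX.trans (minN_le_minN hBX hB.1)
  refine hasHomogeneousSubset_mulSeq_replicate f hC (fun _ => nonempty_of_mem_largeStar)
    (Nat.div_pos hCB (card_pos.2 hC)) (Nat.mul_div_le _ _) (fun R hRX hR => ?_) (n + 1) _
    ((erase_subset _ _).trans hBX) hB.2
  have hRne := nonempty_of_mem_mulK (fun _ => nonempty_of_mem_largeStar)
    ((card_pos.2 hC).trans_le hCB) hR
  exact ihn (#C) C R rfl hRne (hCX.trans (minN_le_minN hRX hRne)) (mulK_anti hCB hR)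
    (hsp.mono hRX) fun x hx => hf x (hRX hx)

lemma largeStarPigeonhole_succ_succ [DecidableEq α] (f : ℕ → α) {n a : ℕ}
    (ihn : ∀ b, LargeStarPigeonhole θ f n b) (iha : LargeStarPigeonhole θ f (n + 1) a) :
    LargeStarPigeonhole θ f (n + 1) (a + 1) := by
  intro C X hC hXne haX hX hsp hf
  obtain ⟨W, hWL, hWX, hW⟩ := hX
  set m := minN (W (Fin.last a))
  set k := m / #C
  have hmW : m ∈ W (Fin.last a) := minN_mem (nonempty_of_mem_largeStar (hWL _))
  have hmX : m ∈ X := hWX _ hmW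
  obtain ⟨c, hc, Z, hZ, hZL, hZc⟩ := hasHomogeneousSubset_erase_minN f ihn
    (card_pos.1 (by omega)) (hC ▸ haX) hsp hf (hWX _) (hWL (Fin.last a))
  by_cases hy : ∃ y ∈ X, y ≤ k ∧ f y = c
  · obtain ⟨y, hyX, hyk, hyc⟩ := hy
    have hyZ : ∀ z ∈ Z, y < z := fun z hz =>
      (hyk.trans (Nat.div_le_self _ _)).trans_lt (minN_lt_of_mem_erase (hZ hz))
    refine ⟨c, hc, insert y Z, insert_subset hyX (hZ.trans ((erase_subset _ _).trans (hWX _))),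
      insert_mem_largeStar_succ hZL hyZ hyk, ?_⟩
    simpa [hyc] using hZc
  push Not at hy
  have ha : a ≠ 0 := by
    rintro rfl
    exact hy m hmX (by simp [k, hC]) (card_le_one.1 hC.le _ (hf m hmX) _ hc)
  set X' := univ.biUnion fun i : Fin a => W i.castSucc
  have hX'X : X' ⊆ X := biUnion_subset.2 fun i _ => hWX _
  have hX'ne : X'.Nonempty := (nonempty_of_mem_largeStar (hWL (Fin.castSucc ⟨0, by omega⟩))).mono
    (subset_biUnion_of_mem (fun i : Fin a => W i.castSucc) (mem_univ _))
  have hX'c : ∀ x ∈ X', f x ∈ C.erase c := by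
    intro x hx
    obtain ⟨i, -, hxi⟩ := mem_biUnion.1 hx
    have hxm : x < m := (hW _ _ (Fin.castSucc_lt_last i)).1 x hxi m hmW
    have hxk : x ≤ k := hsp.le_div (hX'X hx) hmX hxm (by omega)
      (hC ▸ haX.trans (minN_le (hX'X hx)))
    exact mem_erase.2 ⟨hy x (hX'X hx) hxk, hf x (hX'X hx)⟩
  obtain ⟨c', hc', Y, hYX', hYL, hYc⟩ := iha (C.erase c) X' (by rw [card_erase_of_mem hc, hC]; rfl)
    hX'ne ((a.le_succ.trans haX).trans (minN_le_minN hX'X hX'ne))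
    (biUnion_mem_mulK hW Fin.strictMono_castSucc (fun _ => subset_rfl) (fun _ => hWL _)
      (fun _ => nonempty_of_mem_largeStar (hWL _)))
    (hsp.mono hX'X) hX'c
  exact ⟨c', mem_of_mem_erase hc', Y, hYX'.trans hX'X, hYL, hYc⟩

theorem largeStarPigeonhole [DecidableEq α] (θ : ℕ → ℕ → ℕ → Prop) (f : ℕ → α) :
    ∀ n a, LargeStarPigeonhole θ f n a
  | 0, a => largeStarPigeonhole_zero f a
  | n + 1, 0 => largeStarPigeonhole_succ_zero f n
  | n + 1, a + 1 => largeStarPigeonhole_succ_succ f (fun b => largeStarPigeonhole θ f n b)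
      (largeStarPigeonhole θ f (n + 1) a)

end Colourings

/-- pigeonhole principle. -/
theorem stmt_10 (θ : ℕ → ℕ → ℕ → Prop) (n a : ℕ) (X : Finset ℕ)
    (h3 : 3 ≤ minN X) (ha : a ≤ minN X)
    (hX : X ∈ MulK θ (LargeStar θ (n + 1)) a)
    (hsp : ExpSparse X)
    (f : ℕ → ℕ) (hf : ∀ x ∈ X, f x < a) :
    ∃ Y ⊆ X, Y ∈ LargeStar θ n ∧ ∀ x ∈ Y, ∀ y ∈ Y, f x = f y := by
  obtain ⟨c, -, Y, hYX, hYL, hYc⟩ := largeStarPigeonhole θ f n a (range a) X (card_range a)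
    (nonempty_of_minN_pos (by omega)) ha hX hsp fun x hx => mem_range.2 (hf x hx)
  exact ⟨Y, hYX, hYL, fun x hx y hy => (hYc x hx).trans (hYc y hy).symm⟩
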